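/- Let Φ be a root system for a finite real reflection group W, and let (C⃗, c⃗) be a nontrivial m-dependence in Φ with m ≥ 3, whose entries α_1,…,α_m are pairwise distinct and whose underlying set C = {α_1,…,α_m} is a full circuit in Φ. Then there exists an m-dependence (C⃗′, c⃗′) in the Hurwitz orbit of (C⃗, c⃗) under the lifted Hurwitz moves with wt(c⃗′) < wt(c⃗). -/

import Mathlib

open scoped RealInnerProductSpace

variable {V : Type*} [NormedAddCommGroup V] [InnerProductSpace ℝ V] [FiniteDimensional ℝ V]

/-- The orthogonal reflection in the hyperplane `α^⊥`. -/
noncomputable def reflAlong (α : V) : V ≃ₗᵢ[ℝ] V :=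
  Submodule.reflection ((Submodule.span ℝ {α})ᗮ)

/-- An orthogonal reflection: the reflection through the hyperplane orthogonal to some
nonzero vector. -/
def IsReflection (g : V ≃ₗᵢ[ℝ] V) : Prop :=
  ∃ α : V, α ≠ 0 ∧ g = reflAlong α

/-- A finite real reflection group: a finite subgroup of the orthogonal group generated by its
reflections and fixing no nonzero vector. -/
def IsReflectionGroup (W : Subgroup (V ≃ₗᵢ[ℝ] V)) : Prop :=
  (W : Set (V ≃ₗᵢ[ℝ] V)).Finite ∧
    Subgroup.closure {g | g ∈ W ∧ IsReflection g} = W ∧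
    ∀ v : V, (∀ g ∈ W, g v = v) → v = 0
/-- A root system for `W`: a finite `W`-stable set of nonzero vectors, containing exactly two
opposite normal vectors for each reflecting hyperplane of a reflection of `W`. -/
def IsRootSystem (W : Subgroup (V ≃ₗᵢ[ℝ] V)) (Φ : Set V) : Prop :=
  Φ.Finite ∧
    (∀ g ∈ W, ∀ α ∈ Φ, g α ∈ Φ) ∧
    (∀ α ∈ Φ, α ≠ 0 ∧ reflAlong α ∈ W) ∧
    (∀ α ∈ Φ, {x | x ∈ Φ ∧ ∃ r : ℝ, x = r • α} = {α, -α}) ∧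
    (∀ g ∈ W, IsReflection g → ∃ α ∈ Φ, g = reflAlong α)
/-- A circuit: a finite linearly dependent set of vectors, every proper subset of which is
linearly independent. -/
def IsCircuit {V' : Type*} [AddCommGroup V'] [Module ℝ V'] (C : Set V') : Prop :=
  C.Finite ∧ ¬ LinearIndependent ℝ (fun x : C => (x : V')) ∧
    ∀ D : Set V', D ⊂ C → LinearIndependent ℝ (fun x : D => (x : V'))

/-- The weight of a coefficient vector: the sum of absolute values of its entries. -/
noncomputable def wtFn {m : ℕ} (c : Fin m → ℝ) : ℝ := ∑ i, |c i|

/-- The lifted Hurwitz move on `m`-dependences: `σ_i` replaces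
`(α_i, α_{i+1})` by `(α_{i+1}, s_{α_{i+1}}(α_i))` and `(c_i, c_{i+1})` by
`(c_{i+1} + (2⟪α_i, α_{i+1}⟫/⟪α_{i+1}, α_{i+1}⟫)·c_i, c_i)`. -/
noncomputable def DepMove {m : ℕ} (p q : (Fin m → V) × (Fin m → ℝ)) : Prop :=
  ∃ (i : Fin m) (h : (i : ℕ) + 1 < m),
    q.1 i = p.1 ⟨(i : ℕ) + 1, h⟩ ∧
    q.1 ⟨(i : ℕ) + 1, h⟩ = reflAlong (p.1 ⟨(i : ℕ) + 1, h⟩) (p.1 i) ∧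
    q.2 i = p.2 ⟨(i : ℕ) + 1, h⟩ +
      2 * ⟪p.1 i, p.1 ⟨(i : ℕ) + 1, h⟩⟫ / ⟪p.1 ⟨(i : ℕ) + 1, h⟩, p.1 ⟨(i : ℕ) + 1, h⟩⟫ * p.2 i ∧
    q.2 ⟨(i : ℕ) + 1, h⟩ = p.2 i ∧
    ∀ j : Fin m, j ≠ i → j ≠ ⟨(i : ℕ) + 1, h⟩ → q.1 j = p.1 j ∧ q.2 j = p.2 j

/-- Two `m`-dependences lie in the same Hurwitz orbit when they are related by a finite
sequence of lifted Hurwitz moves and their inverses. -/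
noncomputable def SameDepOrbit {m : ℕ} (p q : (Fin m → V) × (Fin m → ℝ)) : Prop :=
  Relation.EqvGen DepMove p q

/-!
Write `v k = c k • α k`, so that `∑ k, v k = 0`. Sliding `α p` to the right past
`α (p+1), …, α j` by inverse Hurwitz moves keeps `α p`, reflects the roots it passes and only
permutes their coefficients, while the coefficient of `α p` becomes `c p * (1 + 2 S / ‖v p‖²)`
with `S = ∑_{p < k ≤ j} ⟪v p, v k⟫`. Hence the weight drops as soon as such a partial sum lies
in `(-‖v p‖², 0)`.

Take `p` with `‖v p‖` maximal. Since `C` is a circuit with at least three elements, the `v k` are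
pairwise non-parallel, and strict Cauchy–Schwarz gives `⟪v p, v k⟫ > -‖v p‖²` for `k ≠ p`: the
partial sums start at `0` and never drop by `‖v p‖²` or more, so the first negative one lies in
that interval. A negative total exists on one side of `p`, because the sums over `k > p` and over
`k < p` add up to `-‖v p‖²`; reversing the sequence maps Hurwitz orbits to Hurwitz orbits and
exchanges the two sides.
-/

open Finset

section Hurwitz

variable {E : Type*} [NormedAddCommGroup E] [InnerProductSpace ℝ E]

lemma reflAlong_reflAlong (x y : E) : reflAlong x (reflAlong x y) = y :=
  Submodule.reflection_reflection _ y

lemma reflAlong_self (x : E) : reflAlong x x = -x :=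
  Submodule.reflection_orthogonalComplement_singleton_eq_neg x

lemma inner_reflAlong_apply_self (x y : E) : ⟪reflAlong x y, x⟫ = -⟪y, x⟫ := by
  have h := (reflAlong x).inner_map_map y x
  rwa [reflAlong_self, inner_neg_right, neg_eq_iff_eq_neg] at h

lemma wtFn_add_abs_add_abs {m : ℕ} {c d : Fin m → ℝ} {i j : Fin m} (hij : i ≠ j)
    (h : ∀ k, k ≠ i → k ≠ j → d k = c k) :
    wtFn d + |c i| + |c j| = wtFn c + |d i| + |d j| := by
  have := Fintype.sum_eq_add i j hij (f := fun k => |d k| - |c k|)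
    fun k hk => by simp [h k hk.1 hk.2]
  simp only [sum_sub_distrib] at this
  unfold wtFn
  linarith

lemma wtFn_comp_rev {m : ℕ} (c : Fin m → ℝ) : wtFn (c ∘ Fin.rev) = wtFn c :=
  Fintype.sum_equiv Fin.revPerm _ _ fun _ => rfl

lemma exists_depMove_moving_right {m : ℕ} (a : Fin m → E) (d : Fin m → ℝ) {i j : Fin m}
    (hij : (j : ℕ) = i + 1) :
    ∃ b e, DepMove (b, e) (a, d) ∧ b j = a i ∧
      e j = d i + 2 * ⟪a j, a i⟫ / ⟪a i, a i⟫ * d j ∧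
      e i = d j ∧ ∀ k, k ≠ i → k ≠ j → b k = a k ∧ e k = d k := by
  have hne : i ≠ j := Fin.ne_of_val_ne (by omega)
  let b := Function.update (Function.update a i (reflAlong (a i) (a j))) j (a i)
  let e := Function.update (Function.update d i (d j)) j
    (d i + 2 * ⟪a j, a i⟫ / ⟪a i, a i⟫ * d j)
  refine ⟨b, e, ⟨i, by omega, ?_⟩, by simp [b], by simp [e], by simp [e, hne],
    fun k hki hkj => by simp [b, e, hki, hkj]⟩
  rw [show (⟨i + 1, by omega⟩ : Fin m) = j from Fin.ext hij.symm]
  refine ⟨by simp [b], by simp [b, hne, reflAlong_reflAlong], ?_, by simp [e, hne],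
    fun k hki hkj => by simp [b, e, hki, hkj]⟩
  simp [b, e, hne, inner_reflAlong_apply_self]
  ring

lemma sum_filter_lt_le_add_succ {M : Type*} [AddCommMonoid M] {m : ℕ} (f : Fin m → M)
    (p r : ℕ) (h : p + (r + 1) < m) :
    ∑ k ∈ univ.filter (fun k : Fin m => p < k ∧ (k : ℕ) ≤ p + (r + 1)), f k =
      f ⟨p + (r + 1), h⟩ + ∑ k ∈ univ.filter (fun k : Fin m => p < k ∧ (k : ℕ) ≤ p + r), f k := by
  rw [← sum_insert (by simp)]
  congr 1
  ext k
  simp only [mem_filter, mem_univ, true_and, mem_insert, Fin.ext_iff]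
  omega

lemma exists_sameDepOrbit_slide_right {m : ℕ} (α : Fin m → E) (c : Fin m → ℝ) (p : Fin m) :
    ∀ (r : ℕ) (hr : (p : ℕ) + r < m), ∃ a d, SameDepOrbit (α, c) (a, d) ∧
      a ⟨p + r, hr⟩ = α p ∧ (∀ k : Fin m, (p : ℕ) + r < k → a k = α k ∧ d k = c k) ∧
      d ⟨p + r, hr⟩ = c p + ∑ k ∈ univ.filter (fun k : Fin m => (p : ℕ) < k ∧ (k : ℕ) ≤ p + r),
        2 * ⟪α k, α p⟫ / ⟪α p, α p⟫ * c k ∧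
      wtFn d = wtFn c - |c p| + |d ⟨p + r, hr⟩|
  | 0, _ => ⟨α, c, .refl _, rfl, fun _ _ => ⟨rfl, rfl⟩,
      by rw [sum_eq_zero fun k hk => by simp at hk; omega]; simp, by simp⟩
  | r + 1, hr => by
    obtain ⟨a, d, horb, hap, hright, hd, hwt⟩ :=
      exists_sameDepOrbit_slide_right α c p r (by omega)
    obtain ⟨b, e, hmove, hb, he, he', hrest⟩ :=
      exists_depMove_moving_right a d (i := ⟨p + r, by omega⟩) (j := ⟨p + (r + 1), hr⟩) rfl
    obtain ⟨ha', hd'⟩ := hright ⟨p + (r + 1), hr⟩ (by simp)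
    refine ⟨b, e, .trans _ _ _ horb (.symm _ _ (.rel _ _ hmove)), by rw [hb, hap], ?_, ?_, ?_⟩
    · intro k hk
      obtain ⟨hbk, hek⟩ :=
        hrest k (Fin.ne_of_val_ne (by simp; omega)) (Fin.ne_of_val_ne (by simp; omega))
      rw [hbk, hek]
      exact hright k (by omega)
    · rw [he, hd, hap, ha', hd', sum_filter_lt_le_add_succ _ _ _ hr]
      ring
    · have := wtFn_add_abs_add_abs (Fin.ne_of_val_ne (by simp) :
        (⟨p + r, by omega⟩ : Fin m) ≠ ⟨p + (r + 1), hr⟩) fun k hk hk' => (hrest k hk hk').2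
      rw [he'] at this
      linarith

lemma exists_mem_Ioo_of_sub_lt (s : ℕ → ℝ) (B : ℝ) (h0 : 0 ≤ s 0) :
    ∀ n, (∀ r < n, s r - B < s (r + 1)) → s n < 0 → ∃ r ≤ n, s r ∈ Set.Ioo (-B) 0
  | 0, _, hn => absurd h0 (not_le.mpr hn)
  | n + 1, hstep, hn => by
    by_cases hs : s n < 0
    · obtain ⟨r, hr, hmem⟩ :=
        exists_mem_Ioo_of_sub_lt s B h0 n (fun r hr => hstep r (by omega)) hs
      exact ⟨r, by omega, hmem⟩
    · exact ⟨n + 1, le_rfl, by linarith [hstep n (by omega)], hn⟩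

lemma abs_one_add_two_mul_div_lt_one {S B : ℝ} (hlo : -B < S) (hhi : S < 0) :
    |1 + 2 * S / B| < 1 := by
  have hB : 0 < B := by linarith
  have h1 : -1 < S / B := by rw [lt_div_iff₀ hB]; linarith
  have h2 : S / B < 0 := div_neg_of_neg_of_pos hhi hB
  rw [abs_lt, mul_div_assoc]
  constructor <;> linarith

lemma exists_sameDepOrbit_wtFn_lt_of_sum_inner_right_neg {m : ℕ} (α : Fin m → E)
    (c : Fin m → ℝ) (p : Fin m) (hp : c p • α p ≠ 0)
    (hstep : ∀ k, k ≠ p → -‖c p • α p‖ ^ 2 < ⟪c p • α p, c k • α k⟫)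
    (hneg : ∑ k ∈ univ.filter (p < ·), ⟪c p • α p, c k • α k⟫ < 0) :
    ∃ a d, SameDepOrbit (α, c) (a, d) ∧ wtFn d < wtFn c := by
  set B := ‖c p • α p‖ ^ 2
  set s : ℕ → ℝ := fun r =>
    ∑ k ∈ univ.filter (fun k : Fin m => (p : ℕ) < k ∧ (k : ℕ) ≤ p + r), ⟪c p • α p, c k • α k⟫
  have hs0 : s 0 = 0 := sum_eq_zero fun k hk => by simp at hk; omega
  have hsn : s (m - 1 - p) < 0 := by
    convert hneg using 2
    ext k
    simp only [mem_filter, mem_univ, true_and, Fin.lt_def]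
    omega
  have hsstep : ∀ r < m - 1 - p, s r - B < s (r + 1) := fun r hr => by
    simp only [s]
    rw [sum_filter_lt_le_add_succ _ _ _ (by omega)]
    linarith [hstep ⟨p + (r + 1), by omega⟩ (Fin.ne_of_val_ne (by simp))]
  obtain ⟨r, hr, hlo, hhi⟩ := exists_mem_Ioo_of_sub_lt s B hs0.ge _ hsstep hsn
  obtain ⟨a, d, horb, -, -, hd, hwt⟩ := exists_sameDepOrbit_slide_right α c p r (by omega)
  refine ⟨a, d, horb, ?_⟩
  have hcp : c p ≠ 0 := left_ne_zero_of_smul hp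
  have hαp : ⟪α p, α p⟫ ≠ 0 := inner_self_ne_zero.mpr (right_ne_zero_of_smul hp)
  have hB : B = c p ^ 2 * ⟪α p, α p⟫ := by
    simp only [B, ← real_inner_self_eq_norm_sq, real_inner_smul_left, real_inner_smul_right]
    ring
  have hcoef : d ⟨p + r, by omega⟩ = c p * (1 + 2 * s r / B) := by
    have hS : c p * (1 + 2 * s r / B) = c p +
        ∑ k ∈ univ.filter (fun k : Fin m => (p : ℕ) < k ∧ (k : ℕ) ≤ p + r),
          2 * c p / B * ⟪c p • α p, c k • α k⟫ := by
      rw [← mul_sum]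
      ring
    rw [hd, hS]
    congr 1
    refine sum_congr rfl fun k _ => ?_
    rw [real_inner_smul_left, real_inner_smul_right, hB, real_inner_comm]
    field_simp
  have hratio := abs_one_add_two_mul_div_lt_one hlo hhi
  rw [hwt, hcoef, abs_mul]
  nlinarith [abs_pos.mpr hcp]

lemma DepMove.rev {m : ℕ} {p q : (Fin m → E) × (Fin m → ℝ)} (h : DepMove p q) :
    DepMove (q.1 ∘ Fin.rev, q.2 ∘ Fin.rev) (p.1 ∘ Fin.rev, p.2 ∘ Fin.rev) := by
  obtain ⟨i, hi, h1, h2, h3, h4, hrest⟩ := h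
  have hj : m - 2 - i + 1 < m := by omega
  have e1 : Fin.rev (⟨m - 2 - i, by omega⟩ : Fin m) = ⟨i + 1, hi⟩ := Fin.ext (by simp; omega)
  have e2 : Fin.rev (⟨m - 2 - i + 1, hj⟩ : Fin m) = i := Fin.ext (by simp; omega)
  refine ⟨⟨m - 2 - i, by omega⟩, hj, ?_⟩
  simp only [Function.comp_apply, e1, e2]
  refine ⟨h1.symm, by rw [h1, h2, reflAlong_reflAlong], ?_, h4.symm, fun j hj1 hj2 => ?_⟩
  · rw [h3, h4, h1, h2, inner_reflAlong_apply_self]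
    ring
  · obtain ⟨ha, hc⟩ := hrest (Fin.rev j)
      (fun h => hj2 (Fin.ext (by simp [Fin.ext_iff] at h ⊢; omega)))
      (fun h => hj1 (Fin.ext (by simp [Fin.ext_iff] at h ⊢; omega)))
    exact ⟨ha.symm, hc.symm⟩

lemma SameDepOrbit.rev {m : ℕ} {p q : (Fin m → E) × (Fin m → ℝ)} (h : SameDepOrbit p q) :
    SameDepOrbit (p.1 ∘ Fin.rev, p.2 ∘ Fin.rev) (q.1 ∘ Fin.rev, q.2 ∘ Fin.rev) := by
  induction h with
  | rel _ _ h => exact .symm _ _ (.rel _ _ h.rev)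
  | refl => exact .refl _
  | symm _ _ _ ih => exact .symm _ _ ih
  | trans _ _ _ _ _ ih₁ ih₂ => exact .trans _ _ _ ih₁ ih₂

lemma exists_sameDepOrbit_wtFn_lt_of_forall_inner_gt {m : ℕ} (α : Fin m → E)
    (c : Fin m → ℝ) (p : Fin m) (hdep : ∑ k, c k • α k = 0) (hp : c p • α p ≠ 0)
    (hstep : ∀ k, k ≠ p → -‖c p • α p‖ ^ 2 < ⟪c p • α p, c k • α k⟫) :
    ∃ a d, SameDepOrbit (α, c) (a, d) ∧ wtFn d < wtFn c := by
  set f := fun k => ⟪c p • α p, c k • α k⟫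
  have hsplit : ∑ k ∈ univ.filter (p < ·), f k + ∑ k ∈ univ.filter (· < p), f k =
      -‖c p • α p‖ ^ 2 := by
    have hrow : ∑ k, f k = 0 := by simp only [f, ← inner_sum, hdep, inner_zero_right]
    rw [← sum_filter_add_sum_filter_not univ (p < ·), show univ.filter (¬p < ·) =
      insert p (univ.filter (· < p)) by ext k; simp [not_lt, le_iff_eq_or_lt, eq_comm],
      sum_insert (by simp)] at hrow
    simp only [f, real_inner_self_eq_norm_sq] at hrow ⊢
    linarith
  rcases lt_or_ge (∑ k ∈ univ.filter (p < ·), f k) 0 with hright | hright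
  · exact exists_sameDepOrbit_wtFn_lt_of_sum_inner_right_neg α c p hp hstep hright
  have hleft : ∑ k ∈ univ.filter (fun k => Fin.rev p < k), f (Fin.rev k) < 0 := by
    have : ∑ k ∈ univ.filter (fun k => Fin.rev p < k), f (Fin.rev k) =
        ∑ k ∈ univ.filter (· < p), f k := by
      rw [sum_filter, sum_filter]
      exact Fintype.sum_equiv Fin.revPerm _ _ fun k => by simp [Fin.rev_lt_iff]
    have := norm_pos_iff.mpr hp
    nlinarith
  obtain ⟨a, d, horb, hlt⟩ := exists_sameDepOrbit_wtFn_lt_of_sum_inner_right_neg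
    (α ∘ Fin.rev) (c ∘ Fin.rev) (Fin.rev p) (by simpa using hp)
    (fun k hk => by simpa using hstep (Fin.rev k) (by rwa [Ne, Fin.rev_eq_iff]))
    (by simpa [f] using hleft)
  refine ⟨a ∘ Fin.rev, d ∘ Fin.rev, by
    simpa [Function.comp_assoc, Fin.rev_involutive.comp_self] using horb.rev, ?_⟩
  rwa [wtFn_comp_rev, ← wtFn_comp_rev c]

lemma abs_real_inner_lt_norm_mul_norm_of_linearIndependent {x y : E}
    (h : LinearIndependent ℝ ![x, y]) : |⟪x, y⟫| < ‖x‖ * ‖y‖ := by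
  rw [LinearIndependent.pair_iff] at h
  have hy : ‖y‖ ≠ 0 := fun hy => by
    simpa using h 0 1 (by simp [norm_eq_zero.mp hy])
  refine abs_lt.mpr ⟨?_, inner_lt_norm_mul_iff_real.mpr fun he =>
    hy (h ‖y‖ (-‖x‖) (by rw [he, neg_smul, add_neg_cancel])).1⟩
  have hneg : ⟪x, -y⟫ < ‖x‖ * ‖-y‖ := inner_lt_norm_mul_iff_real.mpr fun he =>
    hy (h ‖y‖ ‖x‖ (by rw [← norm_neg y, he, smul_neg, neg_add_cancel])).1
  rw [inner_neg_right, norm_neg] at hneg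
  linarith

theorem exists_sameDepOrbit_wtFn_lt {m : ℕ} (hm : 2 ≤ m) (α : Fin m → E) (c : Fin m → ℝ)
    (hα : ∀ k l, k ≠ l → LinearIndependent ℝ ![α k, α l]) (hc : ∀ k, c k ≠ 0)
    (hdep : ∑ k, c k • α k = 0) :
    ∃ a d, SameDepOrbit (α, c) (a, d) ∧ wtFn d < wtFn c := by
  have hpair : ∀ k l, k ≠ l → LinearIndependent ℝ ![c k • α k, c l • α l] := fun k l hkl =>
    (LinearIndependent.pair_smul_smul_iff (hc k).isUnit (hc l).isUnit).mpr (hα k l hkl)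
  have : Nontrivial (Fin m) := Fin.nontrivial_iff_two_le.mpr hm
  obtain ⟨p, hmax⟩ := Finite.exists_max fun k => ‖c k • α k‖
  obtain ⟨q, hqp⟩ : ∃ q : Fin m, q ≠ p := exists_ne p
  refine exists_sameDepOrbit_wtFn_lt_of_forall_inner_gt α c p hdep
    (by simpa using (hpair p q hqp.symm).ne_zero 0) fun k hk => ?_
  have hcs := abs_lt.mp (abs_real_inner_lt_norm_mul_norm_of_linearIndependent (hpair p k hk.symm))
  have := mul_le_mul_of_nonneg_left (hmax k) (norm_nonneg (c p • α p))
  nlinarith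

lemma IsCircuit.linearIndepOn_compl_singleton {M : Type*} [AddCommGroup M] [Module ℝ M] {m : ℕ}
    {α : Fin m → M} (hcirc : IsCircuit (Set.range α)) (hinj : Function.Injective α) (j : Fin m) :
    LinearIndepOn ℝ α {j}ᶜ := by
  refine (linearIndepOn_iff_image hinj.injOn).mpr (hcirc.2.2 _ ?_)
  refine (Set.ssubset_iff_of_subset (Set.image_subset_range _ _)).mpr ⟨α j, ⟨j, rfl⟩, ?_⟩
  rintro ⟨k, hk, hkj⟩
  exact hk (hinj hkj)

lemma IsCircuit.ne_zero_of_sum_smul_eq_zero {M : Type*} [AddCommGroup M] [Module ℝ M] {m : ℕ}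
    {α : Fin m → M} (hcirc : IsCircuit (Set.range α)) (hinj : Function.Injective α)
    {c : Fin m → ℝ} (hne : c ≠ 0) (hdep : ∑ k, c k • α k = 0) (j : Fin m) : c j ≠ 0 := by
  intro hj
  refine hne (funext fun k => ?_)
  by_cases hk : k = j
  · rw [hk, hj, Pi.zero_apply]
  refine linearIndepOn_iff'.mp (hcirc.linearIndepOn_compl_singleton hinj j) (univ.erase j) c
    (by simp) ?_ k (by simp [hk])
  rwa [sum_erase _ (by simp [hj])]

lemma IsCircuit.linearIndependent_pair {M : Type*} [AddCommGroup M] [Module ℝ M] {m : ℕ}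
    (hm : 3 ≤ m) {α : Fin m → M} (hcirc : IsCircuit (Set.range α))
    (hinj : Function.Injective α) {k l : Fin m} (hkl : k ≠ l) :
    LinearIndependent ℝ ![α k, α l] := by
  obtain ⟨j, -, hj⟩ := exists_mem_notMem_of_card_lt_card (s := {k, l}) (t := univ)
    (by simpa using (card_le_two).trans_lt (by omega))
  have hpair : LinearIndepOn ℝ α {k, l} := (hcirc.linearIndepOn_compl_singleton hinj j).mono
    (by simpa using hj)
  exact LinearIndependent.pair_iff.mpr ((LinearIndepOn.pair_iff α hkl).mp hpair)

end Hurwitz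

theorem stmt11_general (m : ℕ) (hm : 3 ≤ m) (α : Fin m → V) (c : Fin m → ℝ)
    (hinj : Function.Injective α)
    (hcirc : IsCircuit (Set.range α))
    (hne : c ≠ 0) (hdep : ∑ j, c j • α j = 0) :
    ∃ (α' : Fin m → V) (c' : Fin m → ℝ),
      SameDepOrbit (α, c) (α', c') ∧ wtFn c' < wtFn c :=
  exists_sameDepOrbit_wtFn_lt (by omega) α c
    (fun _ _ hkl => hcirc.linearIndependent_pair hm hinj hkl)
    (hcirc.ne_zero_of_sum_smul_eq_zero hinj hne hdep) hdep

/-- A nontrivial `m`-dependence (`m ≥ 3`) supported on a full circuit admits an `m`-dependence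
of strictly smaller weight in its Hurwitz orbit. -/
theorem stmt11 (W : Subgroup (V ≃ₗᵢ[ℝ] V)) (hW : IsReflectionGroup W)
    (Φ : Set V) (hΦ : IsRootSystem W Φ)
    (m : ℕ) (hm : 3 ≤ m) (α : Fin m → V) (c : Fin m → ℝ)
    (hαΦ : ∀ j, α j ∈ Φ) (hinj : Function.Injective α)
    (hcirc : IsCircuit (Set.range α))
    (hfull : Subgroup.closure (reflAlong '' Set.range α) = W)
    (hne : c ≠ 0) (hdep : ∑ j, c j • α j = 0) :
    ∃ (α' : Fin m → V) (c' : Fin m → ℝ),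
      SameDepOrbit (α, c) (α', c') ∧ wtFn c' < wtFn c :=
  stmt11_general m hm α c hinj hcirc hne hdep
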